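/- arXiv:0806.1398 — 2 statements merged into one kernel-verified Lean document; each statement's English description precedes it below -/
import Mathlib

section
/- Let D be a unique factorization domain. Then the following are equivalent: (1) D is a D-ring; (2) D satisfies the infinite primes property (IPP); (3) D satisfies the degree polynomial property (DPP); (4) D satisfies the evaluation polynomial property (EPP); (5) D satisfies the strong evaluation polynomial property (SEPP). -/
open Polynomial

def IPP (D : Type*) [CommRing D] [IsDomain D] : Prop :=
  ∀ g : D[X], 1 ≤ g.natDegree →
    {p : D | Prime p ∧ ∃ k : D, g.eval k ≠ 0 ∧ p ∣ g.eval k}.Infinite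

def DPP (D : Type*) [CommRing D] [IsDomain D] : Prop :=
  ∀ f g : D[X], (∀ k : D, g.eval k ≠ 0 → g.eval k ∣ f.eval k) →
    f = 0 ∨ g.natDegree ≤ f.natDegree

def EPP (D : Type*) [CommRing D] [IsDomain D] : Prop :=
  ∀ f g : D[X], g.IsPrimitive → 1 ≤ g.natDegree →
    (∀ k : D, g.eval k ≠ 0 → g.eval k ∣ f.eval k) → g ∣ f

def SEPP (D : Type*) [CommRing D] [IsDomain D] : Prop :=
  ∀ f g : D[X], Irreducible g → 1 ≤ g.natDegree →
    ∃ I : Set D, I.Infinite ∧ ∀ H : Set D, H ⊆ I → H.Infinite →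
      (∀ k ∈ H, g.eval k ≠ 0 → g.eval k ∣ f.eval k) → g ∣ f

def IsDRing (D : Type*) [CommRing D] [IsDomain D] : Prop :=
  ∀ f g : D[X], g ≠ 0 → {k : D | ¬ g.eval k ∣ f.eval k}.Finite →
    g.map (algebraMap D (FractionRing D)) ∣ f.map (algebraMap D (FractionRing D))


/-! The substitution `t ↦ a + g(a) e t` gives `g(a + g(a) e t) = g(a) P(t)` with `P ≡ 1 (mod e)`,
so the prime factors of the values of `P` avoid those of `e`. Taking for `e` the product of a
finite set of primes (DPP ⇒ IPP), or the nonzero resultant `Res(g, f) = a g + b f` of an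
irreducible `g ∤ f` (IPP ⇒ SEPP), shows that the values of `g` cannot all divide `e`. SEPP gives
EPP, even with finitely many exceptional points, by induction over the prime factorisation of `g`;
EPP with finitely many exceptions gives the D-ring property after passing to the primitive part. -/

namespace Polynomial

theorem IsPrimitive.isUnit_of_natDegree_eq_zero {R : Type*} [CommSemiring R] {p : R[X]}
    (hp : p.IsPrimitive) (h : p.natDegree = 0) : IsUnit p := by
  rw [eq_C_of_natDegree_eq_zero h] at hp ⊢
  exact isUnit_C.mpr (hp _ dvd_rfl)

variable {D : Type*} [CommRing D] [IsDomain D]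

theorem eventually_cofinite_eval_ne_zero {p : D[X]} (hp : p ≠ 0) :
    ∀ᶠ k in Filter.cofinite, p.eval k ≠ 0 :=
  Filter.eventually_cofinite.mpr (by simpa using finite_setOfPred_isRoot hp)

theorem exists_eval_add_mul_eq_mul_eval {g : D[X]} {a e : D} (ha : g.eval a ≠ 0) (he : e ≠ 0) :
    ∃ P : D[X], P.natDegree = g.natDegree ∧
      ∀ t, g.eval (a + g.eval a * e * t) = g.eval a * P.eval t ∧ e ∣ P.eval t - 1 := by
  set c := g.eval a
  obtain ⟨H, hH⟩ := X_sub_C_dvd_sub_C_eval (p := g) (a := a)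
  set L : D[X] := C (c * e) * X + C a
  set P : D[X] := 1 + C e * X * H.comp L
  have hcomp : g.comp L = C c * P := by
    have hL : L - C a = C c * (C e * X) := by simp only [L, C_mul]; ring
    have := congrArg (·.comp L) hH
    simp only [sub_comp, mul_comp, X_comp, C_comp, hL] at this
    linear_combination this
  refine ⟨P, ?_, fun t => ⟨?_, ?_⟩⟩
  · rw [← natDegree_C_mul ha, ← hcomp, natDegree_comp, natDegree_linear (mul_ne_zero ha he),
      mul_one]
  · have := congrArg (eval t) hcomp
    simp only [eval_comp, eval_mul, eval_C, L, eval_add, eval_X] at this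
    rw [← this]
    ring_nf
  · refine ⟨t * (H.comp L).eval t, ?_⟩
    simp only [eval_add, eval_one, eval_mul, eval_C, eval_X, eval_comp, add_sub_cancel_left, P]
    ring

/-- A nonzero non-unit value `c = P(k)` divides every `P(k + c t)`. -/
theorem infinite_setOf_not_isUnit_eval [Infinite D] {P : D[X]} {k : D} (hk : P.eval k ≠ 0)
    (hu : ¬IsUnit (P.eval k)) : {t | ¬IsUnit (P.eval t)}.Infinite := by
  refine Set.infinite_of_injective_forall_mem (f := fun t => k + P.eval k * t)
    (fun s t hst => mul_left_cancel₀ hk (add_left_cancel hst)) fun t hunit => hu ?_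
  have hdvd : P.eval k ∣ P.eval (k + P.eval k * t) := by
    have := sub_dvd_eval_sub (k + P.eval k * t) k P
    rw [add_sub_cancel_left] at this
    exact dvd_sub_self_right.mp ((dvd_mul_right _ t).trans this)
  exact isUnit_of_dvd_unit hdvd hunit

end Polynomial

open Polynomial

theorem isUnit_of_forall_prime_dvd_of_dvd_sub_one {D : Type*} [CommRing D]
    [UniqueFactorizationMonoid D] {x e : D} (hx : x ≠ 0) (hprime : ∀ q, Prime q → q ∣ x → q ∣ e)
    (he : e ∣ x - 1) : IsUnit x := by
  by_contra hu
  obtain ⟨q, hq, hqx⟩ := WfDvdMonoid.exists_irreducible_factor hu hx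
  have hq := UniqueFactorizationMonoid.irreducible_iff_prime.mp hq
  exact hq.not_isUnit (isUnit_of_dvd_one (by simpa using dvd_sub hqx ((hprime q hq hqx).trans he)))

theorem Polynomial.resultant_ne_zero_of_not_dvd {D : Type*} [CommRing D] [IsDomain D]
    [IsGCDMonoid D] {g f : D[X]} (hg : Irreducible g) (hdeg : g.natDegree ≠ 0) (h : ¬g ∣ f) :
    g.resultant f ≠ 0 := by
  have hprim := hg.isPrimitive hdeg
  set φ := algebraMap D (FractionRing D)
  have hinj : Function.Injective φ := IsFractionRing.injective D (FractionRing D)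
  have hcop : IsCoprime (g.map φ) (f.map φ) :=
    ((hprim.irreducible_iff_irreducible_map_fraction_map).mp hg).coprime_iff_not_dvd.mpr
      ((hprim.dvd_iff_fraction_map_dvd_fraction_map _).not.mp h)
  have := resultant_ne_zero _ _ hcop
  rw [resultant_map_map, natDegree_map_eq_of_injective hinj,
    natDegree_map_eq_of_injective hinj] at this
  exact (map_ne_zero_iff φ hinj).mp this

def CofiniteEPP (D : Type*) [CommRing D] [IsDomain D] : Prop :=
  ∀ f g : D[X], g.IsPrimitive →
    (∀ᶠ k in Filter.cofinite, g.eval k ≠ 0 → g.eval k ∣ f.eval k) → g ∣ f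

section

variable {D : Type*} [CommRing D] [IsDomain D]

theorem IsDRing.dpp (h : IsDRing D) : DPP D := by
  intro f g hdvd
  by_cases hg : g = 0
  · simp [hg]
  refine or_iff_not_imp_left.mpr fun hf => ?_
  have hinj := IsFractionRing.injective D (FractionRing D)
  have hfin : {k | ¬g.eval k ∣ f.eval k}.Finite :=
    (finite_setOfPred_isRoot hg).subset fun k hk => not_not.mp fun hroot => hk (hdvd k hroot)
  have := natDegree_le_of_dvd (h f g hg hfin) ((Polynomial.map_ne_zero_iff hinj).mpr hf)
  rwa [natDegree_map_eq_of_injective hinj, natDegree_map_eq_of_injective hinj] at this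

theorem IPP.infinite (h : IPP D) : Infinite D :=
  Set.infinite_univ_iff.mp ((h X (by simp)).mono (Set.subset_univ _))

theorem CofiniteEPP.epp (h : CofiniteEPP D) : EPP D :=
  fun f g hg _ hdvd => h f g hg (Filter.Eventually.of_forall hdvd)

theorem CofiniteEPP.isDRing [NormalizedGCDMonoid D] (h : CofiniteEPP D) : IsDRing D := by
  intro f g hg hfin
  have hprim : g.primPart ∣ f := h f g.primPart g.isPrimitive_primPart <|
    (Filter.eventually_cofinite.mpr hfin).mono fun k hk _ => (eval_dvd g.primPart_dvd).trans hk
  have hinj := IsFractionRing.injective D (FractionRing D)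
  have hcontent : IsUnit (C (algebraMap D (FractionRing D) g.content)) :=
    isUnit_C.mpr ((map_ne_zero_iff _ hinj).mpr (content_eq_zero_iff.not.mpr hg)).isUnit
  rw [eq_C_content_mul_primPart g, Polynomial.map_mul, map_C]
  exact hcontent.mul_left_dvd.mpr (Polynomial.map_dvd _ hprim)

/-- Multiplying `f` by the product of the finitely many exceptional values removes the
exceptions; Gauss's lemma then cancels that constant. -/
theorem EPP.cofiniteEPP [IsGCDMonoid D] (h : EPP D) : CofiniteEPP D := by
  intro f g hg hdvd
  rcases Nat.eq_zero_or_pos g.natDegree with h0 | hpos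
  · exact (hg.isUnit_of_natDegree_eq_zero h0).dvd
  have hfin := Filter.eventually_cofinite.mp hdvd
  set m := ∏ k ∈ hfin.toFinset, g.eval k
  have hm : m ≠ 0 := Finset.prod_ne_zero_iff.mpr fun k hk hk0 =>
    hfin.mem_toFinset.mp hk fun hne => absurd hk0 hne
  have hgm : g ∣ C m * f := h _ g hg hpos fun k hk => by
    rw [eval_mul, eval_C]
    by_cases hkZ : k ∈ hfin.toFinset
    · exact (Finset.dvd_prod_of_mem _ hkZ).mul_right _
    · exact ((not_not.mp (mt hfin.mem_toFinset.mpr hkZ)) hk).mul_left _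
  have hinj := IsFractionRing.injective D (FractionRing D)
  rw [hg.dvd_iff_fraction_map_dvd_fraction_map (FractionRing D), Polynomial.map_mul, map_C] at hgm
  rw [hg.dvd_iff_fraction_map_dvd_fraction_map (FractionRing D)]
  exact (isUnit_C.mpr ((map_ne_zero_iff _ hinj).mpr hm).isUnit).dvd_mul_left.mp hgm

variable [UniqueFactorizationMonoid D]

theorem DPP.ipp (h : DPP D) : IPP D := by
  intro g hg hfin
  have exists_nonzero_nonunit : ∀ P : D[X], 1 ≤ P.natDegree → ∃ t, P.eval t ≠ 0 ∧ ¬P.eval t ∣ 1 := by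
    intro P hP
    by_contra! hunits
    rcases h 1 P fun t ht => by rw [eval_one]; exact hunits t ht with h1 | h1
    · exact one_ne_zero h1
    · rw [natDegree_one] at h1; omega
  obtain ⟨a, ha, -⟩ := exists_nonzero_nonunit g hg
  set e := ∏ p ∈ hfin.toFinset, p
  have he : e ≠ 0 := Finset.prod_ne_zero_iff.mpr fun p hp => (hfin.mem_toFinset.mp hp).1.ne_zero
  obtain ⟨P, hPdeg, hP⟩ := exists_eval_add_mul_eq_mul_eval ha he
  obtain ⟨t, ht, hnd⟩ := exists_nonzero_nonunit P (hPdeg ▸ hg)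
  refine hnd (isUnit_of_forall_prime_dvd_of_dvd_sub_one ht (fun q hq hqt => ?_) (hP t).2).dvd
  refine Finset.dvd_prod_of_mem _ (hfin.mem_toFinset.mpr ⟨hq, a + g.eval a * e * t, ?_⟩)
  rw [(hP t).1]
  exact ⟨mul_ne_zero ha ht, hqt.mul_left _⟩

theorem IPP.infinite_setOf_not_eval_dvd (hipp : IPP D) {g : D[X]} (hg : 1 ≤ g.natDegree)
    {e : D} (he : e ≠ 0) : {k | g.eval k ≠ 0 ∧ ¬g.eval k ∣ e}.Infinite := by
  have := hipp.infinite
  intro hfin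
  obtain ⟨a, ha⟩ : ∃ a, g.eval a ≠ 0 := by
    by_contra! h
    exact ne_zero_of_natDegree_gt hg (Polynomial.funext (by simpa using h))
  obtain ⟨P, hPdeg, hP⟩ := exists_eval_add_mul_eq_mul_eval ha he
  have hshift : Function.Injective fun t => a + g.eval a * e * t :=
    fun s t hst => mul_left_cancel₀ (mul_ne_zero ha he) (add_left_cancel hst)
  obtain ⟨q, hq, k, hk, hqk⟩ := (hipp P (hPdeg ▸ hg)).nonempty
  refine infinite_setOf_not_isUnit_eval hk (fun hu => hq.not_isUnit (isUnit_of_dvd_unit hqk hu))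
    (((hfin.preimage hshift.injOn).union (finite_setOfPred_isRoot (ne_zero_of_natDegree_gt
      (hPdeg ▸ hg)))).subset fun t ht => ?_)
  by_contra hmem
  simp only [Set.mem_union, Set.mem_preimage, Set.mem_ofPred_eq, IsRoot.def, not_or, not_and,
    not_not] at hmem
  obtain ⟨hdvd, hPt⟩ := hmem
  rw [(hP t).1] at hdvd
  have hPe : P.eval t ∣ e := (dvd_mul_left _ _).trans (hdvd (mul_ne_zero ha hPt))
  exact ht (isUnit_of_forall_prime_dvd_of_dvd_sub_one hPt (fun q _ hq => hq.trans hPe) (hP t).2)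

theorem IPP.sepp (h : IPP D) : SEPP D := by
  have := h.infinite
  intro f g hg hdeg
  by_cases hgf : g ∣ f
  · exact ⟨Set.univ, Set.infinite_univ, fun _ _ _ _ => hgf⟩
  obtain ⟨a, b, -, -, hab⟩ :=
    exists_mul_add_mul_eq_C_resultant g f le_rfl le_rfl (Or.inl (by omega))
  refine ⟨{k | g.eval k ≠ 0 ∧ ¬g.eval k ∣ g.resultant f},
    h.infinite_setOf_not_eval_dvd hdeg (resultant_ne_zero_of_not_dvd hg (by omega) hgf),
    fun H hHI hH hdvd => ?_⟩
  obtain ⟨k, hk⟩ := hH.nonempty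
  obtain ⟨hgk, hnd⟩ := hHI hk
  have hres := congrArg (eval k) hab
  simp only [eval_add, eval_mul, eval_C] at hres
  exact absurd (hres ▸ dvd_add (dvd_mul_right _ _) ((hdvd k hk hgk).mul_right _)) hnd

theorem SEPP.cofiniteEPP (h : SEPP D) : CofiniteEPP D := by
  intro f g
  induction g using UniqueFactorizationMonoid.induction_on_prime generalizing f with
  | h₁ => exact fun hg => absurd rfl hg.ne_zero
  | h₂ u hu => exact fun _ _ => hu.dvd
  | h₃ g p hg0 hp ih =>
    intro hpg hdvd
    have hpdeg : 1 ≤ p.natDegree := Nat.one_le_iff_ne_zero.mpr fun h0 =>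
      hp.not_isUnit ((isPrimitive_of_dvd hpg (dvd_mul_right p g)).isUnit_of_natDegree_eq_zero h0)
    obtain ⟨I, hI, hIf⟩ := h f p hp.irreducible hpdeg
    have hgood := Filter.eventually_cofinite.mp
      (hdvd.and (eventually_cofinite_eval_ne_zero hpg.ne_zero))
    obtain ⟨f₁, rfl⟩ := hIf _ Set.sdiff_subset (hI.sdiff hgood) fun k hk _ => by
      obtain ⟨hdvd, hne⟩ := not_not.mp hk.2
      exact (eval_dvd (dvd_mul_right p g)).trans (hdvd hne)
    refine mul_dvd_mul_left p (ih f₁ (isPrimitive_of_dvd hpg (dvd_mul_left g p)) ?_)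
    filter_upwards [hdvd, eventually_cofinite_eval_ne_zero hp.ne_zero] with k hk hpk hgk
    simp only [eval_mul] at hk
    exact (mul_dvd_mul_iff_left hpk).mp (hk (mul_ne_zero hpk hgk))

end

theorem DRing_IPP_DPP_EPP_SEPP_tfae (D : Type*) [CommRing D] [IsDomain D]
    [UniqueFactorizationMonoid D] :
    [IsDRing D, IPP D, DPP D, EPP D, SEPP D].TFAE := by
  let _ := UniqueFactorizationMonoid.strongNormalizationMonoid (α := D)
  let _ := UniqueFactorizationMonoid.toNormalizedGCDMonoid D
  tfae_have 1 → 3 := IsDRing.dpp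
  tfae_have 3 → 2 := DPP.ipp
  tfae_have 2 → 5 := IPP.sepp
  tfae_have 5 → 4 := fun h => h.cofiniteEPP.epp
  tfae_have 4 → 1 := fun h => h.cofiniteEPP.isDRing
  tfae_finish
end

section
/- Let d be an integer that is not a perfect square. Then the ring ℤ[√d] = {x + y√d : x, y ∈ ℤ} satisfies the degree polynomial property (DPP); consequently ℤ[√d] is a D-ring. -/
open Polynomial

theorem zsqrtd_isDomain_of_nonsquare {d : ℤ} (hd : ¬ IsSquare d) :
    IsDomain (ℤ√d) := by
  have hd' : ∀ n : ℤ, d ≠ n * n := fun n h => hd ⟨n, h⟩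
  haveI : NoZeroDivisors (ℤ√d) := ⟨fun {a b} hab => by
    have h := congrArg Zsqrtd.norm hab
    rw [Zsqrtd.norm_mul, Zsqrtd.norm_zero] at h
    rcases mul_eq_zero.mp h with h' | h'
    · exact Or.inl ((Zsqrtd.norm_eq_zero hd' a).mp h')
    · exact Or.inr ((Zsqrtd.norm_eq_zero hd' b).mp h')⟩
  exact NoZeroDivisors.to_isDomain _

/-! For n ∈ ℤ, a divisibility g(n) ∣ f(n) in ℤ√d gives N(g(n)) ∣ N(f(n)) in ℤ, and N(f(n)) is the
value at n of the polynomial f·f̄ (coefficients conjugated), which has integer coefficients and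
degree 2 deg f. So it suffices to prove DPP for ℤ, where deg f < deg g forces |f(n)| < |g(n)| for
all large n, hence f(n) = 0 for all large n and f = 0.

DPP implies the D-ring property: clearing denominators in the division f = qg + r over the fraction
field gives R = cf - Qg ∈ D[X] with R ↦ cr. Multiplying R by the finitely many nonzero values of g
where g(k) ∤ f(k) makes the DPP hypothesis hold, and deg r < deg g then forces r = 0. -/

open Filter

theorem Int.dpp : DPP ℤ := by
  intro f g hdvd
  refine or_iff_not_imp_right.2 fun hlt => f.eq_zero_of_infinite_isRoot ?_
  have hsmall : ∀ᶠ n : ℤ in atTop, 2 * |f.eval n| ≤ |g.eval n| := by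
    have hdeg : (f.map (Int.castRingHom ℝ)).degree < (g.map (Int.castRingHom ℝ)).degree := by
      rw [degree_map_eq_of_injective Int.cast_injective,
        degree_map_eq_of_injective Int.cast_injective]
      exact degree_lt_degree (not_le.1 hlt)
    filter_upwards [tendsto_intCast_atTop_atTop.eventually
      ((isLittleO_atTop_of_degree_lt _ _ hdeg).def (by norm_num : (0 : ℝ) < 1 / 2))] with n hn
    simp only [eval_intCast_map, eq_intCast, Int.cast_id, Real.norm_eq_abs] at hn
    exact_mod_cast (by linarith : 2 * |((f.eval n : ℤ) : ℝ)| ≤ |((g.eval n : ℤ) : ℝ)|)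
  obtain ⟨N, hN⟩ := eventually_atTop.1 hsmall
  refine (Set.Ici_infinite N).mono fun n hn => ?_
  have hfg := hN n hn
  by_contra hfn
  have hpos : 0 < |f.eval n| := abs_pos.2 hfn
  have hgn : g.eval n ≠ 0 := fun h => by rw [h, abs_zero] at hfg; linarith
  exact hfn (Int.eq_zero_of_abs_lt_dvd ((abs_dvd _ _).2 (hdvd n hgn)) (by linarith))

section DRing

variable {D : Type*} [CommRing D] [IsDomain D]

theorem DPP.eq_zero_or_natDegree_le_of_finite (hD : DPP D) {f g : D[X]}
    (hfin : {k : D | ¬ g.eval k ∣ f.eval k}.Finite) : f = 0 ∨ g.natDegree ≤ f.natDegree := by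
  classical
  set M := ∏ k ∈ hfin.toFinset with g.eval k ≠ 0, g.eval k
  have hM : M ≠ 0 := Finset.prod_ne_zero_iff.2 fun k hk => (Finset.mem_filter.1 hk).2
  have hdvd : ∀ k, g.eval k ≠ 0 → g.eval k ∣ (C M * f).eval k := by
    intro k hk
    rw [eval_mul, eval_C]
    by_cases hkf : g.eval k ∣ f.eval k
    · exact hkf.mul_left M
    · have hkM : k ∈ hfin.toFinset.filter (g.eval · ≠ 0) :=
        Finset.mem_filter.2 ⟨hfin.mem_toFinset.2 hkf, hk⟩
      exact (Finset.dvd_prod_of_mem _ hkM).mul_right _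
  simpa only [mul_eq_zero, C_eq_zero, hM, false_or, natDegree_C_mul hM] using hD _ g hdvd

theorem exists_map_C_mul_sub_mul_eq_C_mul_mod (f g : D[X]) :
    ∃ c : D, c ≠ 0 ∧ ∃ Q : D[X], (C c * f - Q * g).map (algebraMap D (FractionRing D)) =
      C (algebraMap D (FractionRing D) c) *
        (f.map (algebraMap D (FractionRing D)) % g.map (algebraMap D (FractionRing D))) := by
  set ι := algebraMap D (FractionRing D)
  set q := f.map ι / g.map ι
  obtain ⟨c, hc0, hc⟩ := IsLocalization.integerNormalization_spec (nonZeroDivisors D) q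
  refine ⟨c, nonZeroDivisors.ne_zero hc0,
    IsLocalization.integerNormalization (nonZeroDivisors D) q, ?_⟩
  rw [Polynomial.map_sub, Polynomial.map_mul, Polynomial.map_mul, hc, map_C,
    ← algebraMap_smul (FractionRing D), smul_eq_C_mul, EuclideanDomain.mod_eq_sub_mul_div]
  ring

theorem DPP.isDRing (hD : DPP D) : IsDRing D := by
  intro f g hg hfin
  obtain ⟨c, hc, Q, hR⟩ := exists_map_C_mul_sub_mul_eq_C_mul_mod f g
  set ι := algebraMap D (FractionRing D)
  have hι : Function.Injective ι := IsFractionRing.injective D _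
  set R := C c * f - Q * g
  have hfinR : {k | ¬ g.eval k ∣ R.eval k}.Finite := hfin.subset fun k hkR hkf => hkR <| by
    simp only [R, eval_sub, eval_mul, eval_C]
    exact dvd_sub (hkf.mul_left c) (dvd_mul_left _ _)
  rw [← EuclideanDomain.mod_eq_zero]
  by_contra hr
  have hιc : C (ι c) ≠ 0 := C_ne_zero.2 ((map_ne_zero_iff ι hι).2 hc)
  have hR0 : R ≠ 0 := by
    rintro h
    rw [h, Polynomial.map_zero, eq_comm, mul_eq_zero] at hR
    exact hR.elim hιc hr
  have hdeg : R.natDegree < g.natDegree := by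
    rw [← natDegree_map_eq_of_injective hι R, ← natDegree_map_eq_of_injective hι g, hR]
    refine natDegree_lt_natDegree (mul_ne_zero hιc hr) ?_
    rw [degree_C_mul ((map_ne_zero_iff ι hι).2 hc)]
    exact degree_mod_lt _ ((Polynomial.map_ne_zero_iff hι).2 hg)
  exact (hD.eq_zero_or_natDegree_le_of_finite hfinR).elim hR0 (not_le.2 hdeg)

end DRing

namespace Zsqrtd

variable {d : ℤ}

theorem mul_map_star_mem_lifts (f : (ℤ√d)[X]) :
    f * f.map (starRingEnd (ℤ√d)) ∈ lifts (Int.castRingHom (ℤ√d)) := by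
  set F := f * f.map (starRingEnd (ℤ√d))
  have hF : F.map (starRingEnd (ℤ√d)) = F := by
    have hσσ : (starRingEnd (ℤ√d)).comp (starRingEnd (ℤ√d)) = RingHom.id _ :=
      RingHom.ext starRingEnd_self_apply
    rw [Polynomial.map_mul, Polynomial.map_map, hσσ, Polynomial.map_id, mul_comm]
  refine (lifts_iff_coeff_lifts F).2 fun n => ⟨(F.coeff n).re, ?_⟩
  have him := congrArg (fun p => (p.coeff n).im) hF
  simp only [coeff_map, starRingEnd_apply, im_star] at him
  ext
  · simp only [eq_intCast, re_intCast]
  · simp only [eq_intCast, im_intCast]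
    omega

theorem exists_int_polynomial_eval_eq_norm [IsDomain (ℤ√d)] (f : (ℤ√d)[X]) :
    ∃ P : ℤ[X], (P = 0 ↔ f = 0) ∧ P.natDegree = 2 * f.natDegree ∧
      ∀ n : ℤ, P.eval n = (f.eval (n : ℤ√d)).norm := by
  obtain ⟨P, hPF, hdeg⟩ := exists_natDegree_eq_of_mem_lifts (mul_map_star_mem_lifts f)
  have hι : Function.Injective (Int.castRingHom (ℤ√d)) := Int.cast_injective
  have hσ : Function.Injective (starRingEnd (ℤ√d)) := star_injective
  refine ⟨P, ?_, ?_, fun n => hι ?_⟩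
  · rw [← Polynomial.map_eq_zero_iff hι, hPF, mul_eq_zero, Polynomial.map_eq_zero_iff hσ, or_self]
  · rcases eq_or_ne f 0 with rfl | hf
    · simpa using hdeg
    rw [hdeg, natDegree_mul hf ((Polynomial.map_ne_zero_iff hσ).2 hf),
      natDegree_map_eq_of_injective hσ, two_mul]
  · have h := eval_intCast_map (Int.castRingHom (ℤ√d)) P n
    rw [Int.cast_id, hPF, eval_mul, eval_map, eval₂_at_intCast, starRingEnd_apply,
      ← norm_eq_mul_conj] at h
    rw [← h, eq_intCast]

theorem dpp [IsDomain (ℤ√d)] : DPP (ℤ√d) := by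
  intro f g hdvd
  obtain ⟨P, hP0, hPdeg, hP⟩ := exists_int_polynomial_eval_eq_norm f
  obtain ⟨Q, -, hQdeg, hQ⟩ := exists_int_polynomial_eval_eq_norm g
  have hPQ : ∀ n : ℤ, Q.eval n ≠ 0 → Q.eval n ∣ P.eval n := by
    intro n hn
    rw [hQ] at hn
    rw [hQ, hP]
    exact map_dvd normMonoidHom (hdvd _ fun h => hn (by rw [h, norm_zero]))
  refine (Int.dpp P Q hPQ).imp hP0.1 fun h => ?_
  omega

end Zsqrtd

theorem zsqrtd_DPP_and_DRing (d : ℤ) (hd : ¬ IsSquare d) :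
    haveI : IsDomain (ℤ√d) := zsqrtd_isDomain_of_nonsquare hd
    DPP (ℤ√d) ∧ IsDRing (ℤ√d) := by
  have := zsqrtd_isDomain_of_nonsquare hd
  exact ⟨Zsqrtd.dpp, Zsqrtd.dpp.isDRing⟩
end
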